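/- Let k have characteristic p, let n = p if p is odd and n = 4 if p = 2, and let I = (x_1^n, x_2^n, ..., x_d^n) + (x_1^{n-1}x_2^2) ⊆ k[x_1,...,x_d] with d ≥ 2. Then for every 2 ≤ i ≤ d, the maximal i-th partial degree of a minimal monomial generator of I is n + 1, while a_i(I) = n for all 1 ≤ i ≤ d. -/

import Mathlib

open MvPolynomial

/-- `m` is (the exponent of) a minimal monomial generator of `J`. -/
def IsMinGen {k : Type} [Field k] {d : ℕ} (J : Ideal (MvPolynomial (Fin d) k))
    (m : Fin d →₀ ℕ) : Prop :=
  monomial m (1 : k) ∈ J ∧ ∀ m' : Fin d →₀ ℕ, m' ≤ m → m' ≠ m → monomial m' (1 : k) ∉ J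

/-- the `i`-th partial degree (`1`-based `i`): sum of the exponents of `x_1,…,x_i`,
i.e. of the `0`-indexed variables `t` with `(t : ℕ) < i`. -/
def pdeg {d : ℕ} (i : ℕ) (m : Fin d →₀ ℕ) : ℕ :=
  ∑ t ∈ Finset.univ.filter (fun t : Fin d => (t : ℕ) < i), m t

/-- in characteristic `p`, with `n = p` for odd `p` and `n = 4` for `p = 2`,
the ideal `I = (x_1^n,…,x_d^n) + (x_1^{n-1}x_2²)` (`d ≥ 2`) has maximal `i`-th partial
degree of a minimal monomial generator equal to `n+1` for all `2 ≤ i ≤ d`, while all its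
axial constants equal `n`: `min{m : x_i^m ∈ I} = n` for every `i`. -/
theorem stmt16 {k : Type} [Field k] {d : ℕ} (p n : ℕ) (hp : p.Prime) (hch : CharP k p)
    (hn : n = if p = 2 then 4 else p) (hd : 2 ≤ d)
    (I : Ideal (MvPolynomial (Fin d) k))
    (hI : I = Ideal.span ({g | ∃ t : Fin d, g = X t ^ n} ∪
      {X (⟨0, by omega⟩ : Fin d) ^ (n - 1) * X (⟨1, by omega⟩ : Fin d) ^ 2})) :
    (∀ i : ℕ, 2 ≤ i → i ≤ d →
      sSup {c : ℕ | ∃ m, IsMinGen I m ∧ pdeg i m = c} = n + 1) ∧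
    (∀ t : Fin d, sInf {m : ℕ | X t ^ m ∈ I} = n) := by
  classical
  have hn3 : 3 ≤ n := by
    rcases eq_or_ne p 2 with h | h
    · simp [hn, h]
    · have := hp.two_le
      rw [hn, if_neg h]
      omega
  set e0 : Fin d := ⟨0, by omega⟩ with he0
  set e1 : Fin d := ⟨1, by omega⟩ with he1
  have h01 : e0 ≠ e1 := by
    simp [he0, he1, Fin.ext_iff]
  set g : Fin d →₀ ℕ := Finsupp.single e0 (n - 1) + Finsupp.single e1 2 with hg
  have hge0 : g e0 = n - 1 := by
    simp [hg, Finsupp.single_apply, h01, (h01.symm : e1 ≠ e0)]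
  have hge1 : g e1 = 2 := by
    simp [hg, Finsupp.single_apply, h01]
  have hgother : ∀ t : Fin d, t ≠ e0 → t ≠ e1 → g t = 0 := by
    intro t ht0 ht1
    simp [hg, Finsupp.single_apply, ht0.symm, ht1.symm, Ne.symm ht0, Ne.symm ht1]
  set S : Set (Fin d →₀ ℕ) := {s | ∃ t, s = Finsupp.single t n} ∪ {g} with hS
  have hIS : I = Ideal.span ((fun s => monomial s (1 : k)) '' S) := by
    rw [hI]
    congr 1
    ext f
    constructor
    · rintro (⟨t, rfl⟩ | hf)
      · exact ⟨Finsupp.single t n, Or.inl ⟨t, rfl⟩, (X_pow_eq_monomial).symm⟩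
      · refine ⟨g, Or.inr rfl, ?_⟩
        simp only [Set.mem_singleton_iff] at hf
        rw [hf, hg, X_pow_eq_monomial, X_pow_eq_monomial, monomial_mul, one_mul]
    · rintro ⟨s, (⟨t, rfl⟩ | hs), rfl⟩
      · exact Or.inl ⟨t, X_pow_eq_monomial.symm⟩
      · simp only [Set.mem_singleton_iff] at hs
        subst hs
        right
        rw [hg, X_pow_eq_monomial, X_pow_eq_monomial, monomial_mul, one_mul]
        exact rfl
  have hgle : ∀ m : Fin d →₀ ℕ, g ≤ m ↔ (n - 1 ≤ m e0 ∧ 2 ≤ m e1) := by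
    intro m
    constructor
    · intro h
      exact ⟨hge0 ▸ h e0, hge1 ▸ h e1⟩
    · rintro ⟨h1, h2⟩ t
      rcases eq_or_ne t e0 with rfl | ht0
      · rwa [hge0]
      rcases eq_or_ne t e1 with rfl | ht1
      · rwa [hge1]
      · rw [hgother t ht0 ht1]; exact Nat.zero_le _
  have hmem : ∀ m : Fin d →₀ ℕ, monomial m (1 : k) ∈ I ↔
      ((∃ t, n ≤ m t) ∨ (n - 1 ≤ m e0 ∧ 2 ≤ m e1)) := by
    intro m
    rw [hIS, mem_ideal_span_monomial_image]
    have hsupp : (monomial m (1 : k)).support = {m} := by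
      rw [support_monomial, if_neg one_ne_zero]
    rw [hsupp]
    simp only [Finset.mem_singleton, forall_eq]
    constructor
    · rintro ⟨s, (⟨t, rfl⟩ | hs), hle⟩
      · exact Or.inl ⟨t, (Finsupp.single_le_iff).mp hle⟩
      · simp only [hS, Set.mem_singleton_iff] at hs
        subst hs
        exact Or.inr ((hgle m).mp hle)
    · rintro (⟨t, ht⟩ | h)
      · exact ⟨Finsupp.single t n, Or.inl ⟨t, rfl⟩, Finsupp.single_le_iff.mpr ht⟩
      · exact ⟨g, Or.inr rfl, (hgle m).mpr h⟩
  -- total degree facts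
  have hsum_single : ∀ (t : Fin d) (a : ℕ) (s : Finset (Fin d)),
      ∑ x ∈ s, (Finsupp.single t a) x = if t ∈ s then a else 0 := by
    intro t a s
    simp only [Finsupp.single_apply]
    exact Finset.sum_ite_eq s t (fun _ => a)
  constructor
  · intro i hi2 hid
    have hmins : ∀ m, IsMinGen I m → m ∈ S := by
      rintro m ⟨hmI, hmin⟩
      rw [hIS, mem_ideal_span_monomial_image] at hmI
      have hsupp : (monomial m (1 : k)).support = {m} := by
        rw [support_monomial, if_neg one_ne_zero]
      rw [hsupp] at hmI
      simp only [Finset.mem_singleton, forall_eq] at hmI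
      obtain ⟨s, hsS, hsm⟩ := hmI
      have hsI : monomial s (1 : k) ∈ I := by
        rw [hIS]
        exact Ideal.subset_span ⟨s, hsS, rfl⟩
      by_contra hne
      rcases eq_or_ne s m with rfl | hsm'
      · exact hne hsS
      · exact hmin s hsm hsm' hsI
    have hub : ∀ c ∈ {c : ℕ | ∃ m, IsMinGen I m ∧ pdeg i m = c}, c ≤ n + 1 := by
      rintro c ⟨m, hm, rfl⟩
      have hmS := hmins m hm
      have : pdeg i m ≤ ∑ t, m t := by
        apply Finset.sum_le_sum_of_subset (Finset.filter_subset _ _)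
      rcases hmS with ⟨t, rfl⟩ | hmg
      · calc pdeg i _ ≤ ∑ x, (Finsupp.single t n) x := this
          _ = n := by rw [hsum_single]; simp
          _ ≤ n + 1 := Nat.le_succ n
      · simp only [Set.mem_singleton_iff] at hmg
        subst hmg
        calc pdeg i g ≤ ∑ x, g x := this
          _ = n + 1 := by
            rw [hg]
            simp only [Finsupp.add_apply, Finset.sum_add_distrib, hsum_single]
            simp
            omega
    have hgmin : IsMinGen I g := by
      constructor
      · rw [hmem]
        exact Or.inr ⟨le_of_eq hge0.symm, le_of_eq hge1.symm⟩
      · intro m' hle hne hmem'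
        rw [hmem] at hmem'
        rcases hmem' with ⟨t, ht⟩ | ⟨h1, h2⟩
        · have := hle t
          rcases eq_or_ne t e0 with rfl | ht0
          · rw [hge0] at this; omega
          rcases eq_or_ne t e1 with rfl | ht1
          · rw [hge1] at this; omega
          · rw [hgother t ht0 ht1] at this; omega
        · apply hne
          ext t
          rcases eq_or_ne t e0 with rfl | ht0
          · have := hle e0; rw [hge0] at this ⊢; omega
          rcases eq_or_ne t e1 with rfl | ht1
          · have := hle e1; rw [hge1] at this ⊢; omega
          · have := hle t; rw [hgother t ht0 ht1] at this ⊢; omega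
    have hpg : pdeg i g = n + 1 := by
      unfold pdeg
      rw [hg]
      simp only [Finsupp.add_apply, Finset.sum_add_distrib, hsum_single]
      rw [if_pos, if_pos]
      · omega
      · simp only [Finset.mem_filter, Finset.mem_univ, true_and, he1]
        omega
      · simp only [Finset.mem_filter, Finset.mem_univ, true_and, he0]
        omega
    have hmemset : n + 1 ∈ {c : ℕ | ∃ m, IsMinGen I m ∧ pdeg i m = c} := ⟨g, hgmin, hpg⟩
    exact le_antisymm (csSup_le ⟨n + 1, hmemset⟩ hub) (le_csSup ⟨n + 1, hub⟩ hmemset)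
  · intro t
    have hset : {m : ℕ | X t ^ m ∈ I} = Set.Ici n := by
      ext m
      simp only [Set.mem_setOf_eq, Set.mem_Ici]
      rw [X_pow_eq_monomial, hmem]
      constructor
      · rintro (⟨t', ht'⟩ | ⟨h1, h2⟩)
        · rcases eq_or_ne t t' with rfl | hne
          · rwa [Finsupp.single_eq_same] at ht'
          · rw [Finsupp.single_eq_of_ne' hne] at ht'; omega
        · rcases eq_or_ne t e0 with rfl | h0
          · rw [Finsupp.single_eq_of_ne' h01] at h2; omega
          · rw [Finsupp.single_eq_of_ne' h0] at h1; omega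
      · intro h
        exact Or.inl ⟨t, by rwa [Finsupp.single_eq_same]⟩
    rw [hset, csInf_Ici]
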